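/- Let M_k be an RKHM over ℂ^{m×m}, let x_0,…,x_T ∈ Y with {φ(x_t)}_{t=0}^{T-1} ℂ^{m×m}-linearly independent, and let W_T be the finite-dimensional submodule spanned by {φ(x_t)}_{t=0}^{T-1}. Let K be a ℂ^{m×m}-linear map with Kφ(x_t) = φ(x_{t+1}). Let Q_T be the orthonormal system obtained by exact (ε = 0) Gram–Schmidt from {φ(x_t)}_{t=0}^{T-1}, so that Q_T Q_T* is the orthogonal projection onto W_T. Then K̂ := Q_T Q_T* K Q_T Q_T* is the unique minimizer over ℂ^{m×m}-linear maps K̂ on W_T of the matrix-valued objective Σ_{t=0}^{T-1} |K̂ φ(x_t) − φ(x_{t+1})|² (with respect to the positive-semidefinite order on ℂ^{m×m}). -/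

import Mathlib

open scoped Matrix.Norms.L2Operator ComplexOrder

/-- A Hilbert C*-module over the C*-algebra `ℂ^{m×m}` of `m × m` complex matrices (with the
operator norm): a right module with a matrix-valued inner product inducing the norm of `M`. -/
structure HilbertModuleMat (m : ℕ) (M : Type*) [NormedAddCommGroup M] where
  smul : M → Matrix (Fin m) (Fin m) ℂ → M
  inner : M → M → Matrix (Fin m) (Fin m) ℂ
  smul_add_vec : ∀ (u v : M) c, smul (u + v) c = smul u c + smul v c
  smul_add_alg : ∀ (u : M) c d, smul u (c + d) = smul u c + smul u d
  smul_mul : ∀ (u : M) c d, smul u (c * d) = smul (smul u c) d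
  smul_one : ∀ u : M, smul u 1 = u
  inner_add_right : ∀ u v w : M, inner u (v + w) = inner u v + inner u w
  inner_smul_right : ∀ (u v : M) c, inner u (smul v c) = inner u v * c
  inner_conj : ∀ u v : M, inner v u = star (inner u v)
  inner_self_posSemidef : ∀ u : M, (inner u u).PosSemidef
  inner_definite : ∀ u : M, inner u u = 0 → u = 0
  norm_eq : ∀ u : M, ‖u‖ = Real.sqrt ‖inner u u‖

/-- A vector `q` is *normalized* if `⟨q,q⟩` is a nonzero idempotent. -/
def HilbertModuleMat.Normalized {m : ℕ} {M : Type*} [NormedAddCommGroup M]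
    (h : HilbertModuleMat m M) (q : M) : Prop :=
  h.inner q q ≠ 0 ∧ h.inner q q * h.inner q q = h.inner q q

/-- The `ℂ^{m×m}`-linear span of a finite family. -/
def finSpan {m T : ℕ} {M : Type*} [NormedAddCommGroup M] (h : HilbertModuleMat m M)
    (w : Fin T → M) : Set M :=
  {u : M | ∃ c : Fin T → Matrix (Fin m) (Fin m) ℂ, u = ∑ t, h.smul (w t) (c t)}

/-- The orthogonal projection onto the span of an orthonormal family. -/
def finProj {m T : ℕ} {M : Type*} [NormedAddCommGroup M] (h : HilbertModuleMat m M)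
    (q : Fin T → M) (u : M) : M :=
  ∑ t, h.smul (q t) (h.inner (q t) u)

/-!
For a normalized `q` with `p = ⟨q, q⟩` one has `q p = q`, hence
`⟨q, P u - u⟩ = ⟨q p, P u - u⟩ = p (p ⟨q, u⟩ - ⟨q, u⟩) = 0`: the residual of the projection
`P = Q_T Q_T*` is orthogonal to `W_T`. So for `F t ∈ W_T` Pythagoras gives
`|F t - w_{t+1}|² = |F t - P w_{t+1}|² + |P w_{t+1} - w_{t+1}|²`, and the excess of the objective
over its value at `P` is `Σ_t |F t - P w_{t+1}|²`, a sum of positive semidefinite matrices that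
vanishes only if every `F t = P w_{t+1}`.
-/

open scoped MatrixOrder in
theorem Matrix.PosSemidef.eq_zero_of_sum_eq_zero {ι n 𝕜 : Type*} [RCLike 𝕜] {s : Finset ι}
    {A : ι → Matrix n n 𝕜} (hA : ∀ i ∈ s, (A i).PosSemidef) (hsum : ∑ i ∈ s, A i = 0) :
    ∀ i ∈ s, A i = 0 :=
  (Finset.sum_eq_zero_iff_of_nonneg fun i hi => (hA i hi).nonneg).1 hsum

namespace HilbertModuleMat

variable {m : ℕ} {M : Type*} [NormedAddCommGroup M] (h : HilbertModuleMat m M)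

def innerAddHom (u : M) : M →+ Matrix (Fin m) (Fin m) ℂ :=
  AddMonoidHom.mk' (h.inner u) (h.inner_add_right u)

def smulAddHom (c : Matrix (Fin m) (Fin m) ℂ) : M →+ M :=
  AddMonoidHom.mk' (h.smul · c) fun u v => h.smul_add_vec u v c

theorem inner_sub_right (u v w : M) : h.inner u (v - w) = h.inner u v - h.inner u w :=
  map_sub (h.innerAddHom u) v w

theorem inner_sum_right {ι : Type*} (s : Finset ι) (u : M) (f : ι → M) :
    h.inner u (∑ i ∈ s, f i) = ∑ i ∈ s, h.inner u (f i) :=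
  map_sum (h.innerAddHom u) f s

theorem smul_sum {ι : Type*} (s : Finset ι) (f : ι → M) (c : Matrix (Fin m) (Fin m) ℂ) :
    h.smul (∑ i ∈ s, f i) c = ∑ i ∈ s, h.smul (f i) c :=
  map_sum (h.smulAddHom c) f s

theorem inner_add_left (u v w : M) : h.inner (u + v) w = h.inner u w + h.inner v w := by
  rw [h.inner_conj, h.inner_add_right, star_add, ← h.inner_conj, ← h.inner_conj]

theorem inner_sub_left (u v w : M) : h.inner (u - v) w = h.inner u w - h.inner v w := by
  rw [h.inner_conj, h.inner_sub_right, star_sub, ← h.inner_conj, ← h.inner_conj]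

theorem inner_smul_left (u v : M) (c : Matrix (Fin m) (Fin m) ℂ) :
    h.inner (h.smul u c) v = star c * h.inner u v := by
  rw [h.inner_conj, h.inner_smul_right, star_mul, ← h.inner_conj]

theorem inner_add_self_of_inner_eq_zero {u v : M} (hvu : h.inner v u = 0) :
    h.inner (u + v) (u + v) = h.inner u u + h.inner v v := by
  rw [h.inner_add_left, h.inner_add_right, h.inner_add_right, h.inner_conj v u, hvu,
    star_zero, add_zero, zero_add]

theorem smul_inner_self_of_normalized {q : M} (hq : h.Normalized q) :
    h.smul q (h.inner q q) = q := by
  have hp : star (h.inner q q) = h.inner q q := (h.inner_conj q q).symm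
  refine sub_eq_zero.1 (h.inner_definite _ ?_)
  simp only [h.inner_sub_left, h.inner_sub_right, h.inner_smul_right, h.inner_smul_left, hp,
    hq.2, sub_self]

def combination {T : ℕ} (w : Fin T → M) : (Fin T → Matrix (Fin m) (Fin m) ℂ) →+ M :=
  AddMonoidHom.mk' (fun c => ∑ t, h.smul (w t) (c t)) fun c d => by
    simp only [Pi.add_apply, h.smul_add_alg, Finset.sum_add_distrib]

end HilbertModuleMat

section Span

variable {m : ℕ} {M : Type*} [NormedAddCommGroup M] (h : HilbertModuleMat m M)

theorem mem_finSpan_iff_mem_range {T : ℕ} {w : Fin T → M} {u : M} :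
    u ∈ finSpan h w ↔ u ∈ (h.combination w).range :=
  exists_congr fun _ => eq_comm

theorem sub_mem_finSpan {T : ℕ} {w : Fin T → M} {u v : M} (hu : u ∈ finSpan h w)
    (hv : v ∈ finSpan h w) : u - v ∈ finSpan h w := by
  rw [mem_finSpan_iff_mem_range] at *
  exact sub_mem hu hv

theorem smul_mem_finSpan {T : ℕ} {w : Fin T → M} {u : M} (hu : u ∈ finSpan h w)
    (c : Matrix (Fin m) (Fin m) ℂ) : h.smul u c ∈ finSpan h w := by
  obtain ⟨d, rfl⟩ := hu
  exact ⟨fun t => d t * c, by simp only [h.smul_sum, h.smul_mul]⟩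

theorem finSpan_subset {S T : ℕ} {v : Fin S → M} {w : Fin T → M}
    (hv : ∀ s, v s ∈ finSpan h w) : finSpan h v ⊆ finSpan h w := by
  rintro u ⟨c, rfl⟩
  rw [mem_finSpan_iff_mem_range]
  exact sum_mem fun s _ => (mem_finSpan_iff_mem_range h).1 (smul_mem_finSpan h (hv s) (c s))

theorem finProj_mem_finSpan {T : ℕ} (q : Fin T → M) (u : M) : finProj h q u ∈ finSpan h q :=
  ⟨fun t => h.inner (q t) u, rfl⟩

end Span

section Projection

variable {m T : ℕ} {M : Type*} [NormedAddCommGroup M] (h : HilbertModuleMat m M)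
  {q : Fin T → M} (hON : ∀ s t, s ≠ t → h.inner (q s) (q t) = 0)
  (hN : ∀ t, h.Normalized (q t))
include hON

theorem inner_finProj (s : Fin T) (u : M) :
    h.inner (q s) (finProj h q u) = h.inner (q s) (q s) * h.inner (q s) u := by
  rw [finProj, h.inner_sum_right, Finset.sum_eq_single_of_mem s (Finset.mem_univ s)
    fun r _ hrs => by rw [h.inner_smul_right, hON s r (Ne.symm hrs), zero_mul],
    h.inner_smul_right]

include hN

theorem inner_finProj_sub_self_of_mem (u : M) {v : M} (hv : v ∈ finSpan h q) :
    h.inner (finProj h q u - u) v = 0 := by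
  have horth : ∀ s, h.inner (q s) (finProj h q u - u) = 0 := fun s => by
    set p := h.inner (q s) (q s)
    have hp : star p = p := (h.inner_conj (q s) (q s)).symm
    calc h.inner (q s) (finProj h q u - u)
        = h.inner (h.smul (q s) p) (finProj h q u - u) := by
          rw [h.smul_inner_self_of_normalized (hN s)]
      _ = p * (p * h.inner (q s) u - h.inner (q s) u) := by
          rw [h.inner_smul_left, h.inner_sub_right, inner_finProj h hON, hp]
      _ = 0 := by rw [mul_sub, ← mul_assoc, (hN s).2, sub_self]
  obtain ⟨c, rfl⟩ := hv
  rw [h.inner_sum_right]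
  exact Finset.sum_eq_zero fun s _ => by
    rw [h.inner_smul_right, h.inner_conj, horth, star_zero, zero_mul]

theorem inner_sub_self_eq_add_finProj (u : M) {v : M} (hv : v ∈ finSpan h q) :
    h.inner (v - u) (v - u) = h.inner (v - finProj h q u) (v - finProj h q u) +
      h.inner (finProj h q u - u) (finProj h q u - u) := by
  have := h.inner_add_self_of_inner_eq_zero (inner_finProj_sub_self_of_mem h hON hN u
    (sub_mem_finSpan h hv (finProj_mem_finSpan h q u)))
  rwa [sub_add_sub_cancel] at this

end Projection

theorem perron_frobenius_estimation_min_general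
    {m T : ℕ} {M : Type*} [NormedAddCommGroup M]
    (h : HilbertModuleMat m M) (w : Fin (T + 1) → M)
    (q : Fin T → M)
    (hON : ∀ s t, s ≠ t → h.inner (q s) (q t) = 0)
    (hN : ∀ t, h.Normalized (q t))
    (hqW : ∀ t, q t ∈ finSpan h (fun t : Fin T => w t.castSucc))
    (hWq : ∀ t : Fin T, w t.castSucc ∈ finSpan h q) :
    (∀ t : Fin T, finProj h q (w t.succ) ∈ finSpan h (fun t : Fin T => w t.castSucc)) ∧
    ∀ F : Fin T → M, (∀ t, F t ∈ finSpan h (fun t : Fin T => w t.castSucc)) →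
      ((∑ t : Fin T,
          (h.inner (F t - w t.succ) (F t - w t.succ) -
            h.inner (finProj h q (w t.succ) - w t.succ)
              (finProj h q (w t.succ) - w t.succ))).PosSemidef ∧
      ((∑ t : Fin T, h.inner (F t - w t.succ) (F t - w t.succ)) =
          (∑ t : Fin T, h.inner (finProj h q (w t.succ) - w t.succ)
            (finProj h q (w t.succ) - w t.succ)) →
        ∀ t, F t = finProj h q (w t.succ))) := by
  refine ⟨fun t => finSpan_subset h hqW (finProj_mem_finSpan h q _), fun F hF => ?_⟩
  have hFq : ∀ t, F t ∈ finSpan h q := fun t => finSpan_subset h hWq (hF t)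
  have hexcess : ∑ t : Fin T, (h.inner (F t - w t.succ) (F t - w t.succ) -
      h.inner (finProj h q (w t.succ) - w t.succ) (finProj h q (w t.succ) - w t.succ)) =
      ∑ t : Fin T, h.inner (F t - finProj h q (w t.succ)) (F t - finProj h q (w t.succ)) :=
    Finset.sum_congr rfl fun t _ => by
      rw [inner_sub_self_eq_add_finProj h hON hN _ (hFq t), add_sub_cancel_right]
  refine ⟨hexcess ▸ Matrix.posSemidef_sum _ fun t _ => h.inner_self_posSemidef _,
    fun hmin t => ?_⟩
  have hzero : ∑ t : Fin T,
      h.inner (F t - finProj h q (w t.succ)) (F t - finProj h q (w t.succ)) = 0 := by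
    rw [← hexcess, Finset.sum_sub_distrib, hmin, sub_self]
  exact sub_eq_zero.1 (h.inner_definite _ (Matrix.PosSemidef.eq_zero_of_sum_eq_zero
    (fun t _ => h.inner_self_posSemidef _) hzero t (Finset.mem_univ t)))

/-- Estimation of the Perron–Frobenius operator: with `{φ(x_t)}_{t<T}` linearly independent
spanning `W_T`, `K φ(x_t) = φ(x_{t+1})`, and `{q_t}` an exact Gram–Schmidt orthonormal basis
of `W_T`, the compression `Q_T Q_T* K Q_T Q_T*` (i.e. `φ(x_t) ↦ P(φ(x_{t+1}))` with `P` the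
orthogonal projection onto `W_T`) is the unique minimizer, over `ℂ^{m×m}`-linear maps of
`W_T` to itself encoded by their values `F t` on the basis `φ(x_t)`, of the matrix-valued
objective `Σ_t |F t − φ(x_{t+1})|²` in the positive semidefinite order. -/
theorem perron_frobenius_estimation_min
    {m T : ℕ} {M : Type*} [NormedAddCommGroup M] [CompleteSpace M]
    (h : HilbertModuleMat m M) (w : Fin (T + 1) → M)
    (hindep : ∀ c : Fin T → Matrix (Fin m) (Fin m) ℂ,
      ∑ t : Fin T, h.smul (w t.castSucc) (c t) = 0 → ∀ t, c t = 0)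
    (q : Fin T → M)
    (hON : ∀ s t, s ≠ t → h.inner (q s) (q t) = 0)
    (hN : ∀ t, h.Normalized (q t))
    (hqW : ∀ t, q t ∈ finSpan h (fun t : Fin T => w t.castSucc))
    (hWq : ∀ t : Fin T, w t.castSucc ∈ finSpan h q) :
    (∀ t : Fin T, finProj h q (w t.succ) ∈ finSpan h (fun t : Fin T => w t.castSucc)) ∧
    ∀ F : Fin T → M, (∀ t, F t ∈ finSpan h (fun t : Fin T => w t.castSucc)) →
      ((∑ t : Fin T,
          (h.inner (F t - w t.succ) (F t - w t.succ) -
            h.inner (finProj h q (w t.succ) - w t.succ)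
              (finProj h q (w t.succ) - w t.succ))).PosSemidef ∧
      ((∑ t : Fin T, h.inner (F t - w t.succ) (F t - w t.succ)) =
          (∑ t : Fin T, h.inner (finProj h q (w t.succ) - w t.succ)
            (finProj h q (w t.succ) - w t.succ)) →
        ∀ t, F t = finProj h q (w t.succ))) :=
  perron_frobenius_estimation_min_general h w q hON hN hqW hWq
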